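/- arXiv:2409.12810 — 2 statements merged into one kernel-verified Lean document; each statement's English description precedes it below -/
import Mathlib

section
/- Let n ≥ 2 be an integer, let γ > 0 and ε > 0, let Å be a real symmetric traceless n × n matrix with Frobenius norm |Å| ≤ ε, and let H, h₀ be real numbers with H ≥ γ, h₀ ≥ 0 and (H − h₀)² ≤ ε. Set |A|² := |Å|² + H²/n. Then 2|A|²|Å|² − 2h₀·(tr(Å³) + (2/n)·H·|Å|²) ≤ (−γ²/n + (2n+2)ε² + 2ε^{3/2} + (8/n)ε)·|Å|². -/
set_option maxHeartbeats 1000000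


/-- The core pointwise algebraic estimate of Lemma 3.2: for a symmetric traceless matrix `A`
(denoted `Å` in the paper) with Frobenius norm at most `ε`, and reals `H ≥ γ`, `h₀ ≥ 0` with
`(H - h₀)² ≤ ε`, setting `|A|² = |Å|² + H²/n`, we have
`2|A|²|Å|² − 2h₀(tr(Å³) + (2/n)H|Å|²) ≤ (−γ²/n + (2n+2)ε² + 2ε^{3/2} + (8/n)ε)|Å|²`. -/
theorem traceless_second_fundamental_form_estimate
    {n : ℕ} (hn : 2 ≤ n) (γ ε H h₀ : ℝ) (hγ : 0 < γ) (hε : 0 < ε)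
    (A : Matrix (Fin n) (Fin n) ℝ) (hsym : A.IsSymm) (htr : A.trace = 0)
    (hnorm : Real.sqrt (∑ i, ∑ j, (A i j) ^ 2) ≤ ε)
    (hH : γ ≤ H) (hh₀ : 0 ≤ h₀) (hHh₀ : (H - h₀) ^ 2 ≤ ε) :
    2 * ((Real.sqrt (∑ i, ∑ j, (A i j) ^ 2)) ^ 2 + H ^ 2 / n) *
        (Real.sqrt (∑ i, ∑ j, (A i j) ^ 2)) ^ 2
      - 2 * h₀ * ((A ^ 3).trace + (2 / n) * H * (Real.sqrt (∑ i, ∑ j, (A i j) ^ 2)) ^ 2)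
    ≤ (-γ ^ 2 / n + (2 * n + 2) * ε ^ 2 + 2 * ε ^ ((3 : ℝ) / 2) + (8 / n) * ε) *
        (Real.sqrt (∑ i, ∑ j, (A i j) ^ 2)) ^ 2 := by
  set S : ℝ := ∑ i, ∑ j, (A i j) ^ 2 with hSdef
  have hS0 : 0 ≤ S := Finset.sum_nonneg fun i _ => Finset.sum_nonneg fun j _ => sq_nonneg _
  have hsq : Real.sqrt S ^ 2 = S := Real.sq_sqrt hS0
  rw [hsq]
  set r : ℝ := Real.sqrt S with hrdef
  have hr0 : 0 ≤ r := Real.sqrt_nonneg _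
  have hr2 : r ^ 2 = S := hsq
  have hrε : r ≤ ε := hnorm
  -- cast of n
  have hn2 : (2:ℝ) ≤ (n:ℝ) := by exact_mod_cast hn
  have hn0 : (0:ℝ) < (n:ℝ) := by linarith
  -- e = sqrt ε
  set e : ℝ := Real.sqrt ε with hedef
  have he0 : 0 ≤ e := Real.sqrt_nonneg _
  have he2 : e ^ 2 = ε := Real.sq_sqrt hε.le
  have hεe : ε ^ ((3:ℝ)/2) = ε * e := by
    rw [hedef, show (3:ℝ)/2 = 1 + 1/2 by norm_num, Real.rpow_add hε, Real.rpow_one,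
      Real.sqrt_eq_rpow]
  have hd : |H - h₀| ≤ e := by
    rw [hedef]
    calc |H - h₀| = Real.sqrt ((H - h₀)^2) := (Real.sqrt_sq_eq_abs _).symm
      _ ≤ Real.sqrt ε := Real.sqrt_le_sqrt hHh₀
  have hd1 : h₀ ≤ H + e := by cases' abs_le.mp hd with h1 h2; linarith
  have hd2 : H - e ≤ h₀ := by cases' abs_le.mp hd with h1 h2; linarith
  -- trace bound
  set t : ℝ := (A ^ 3).trace with htdef
  have htr3 : t = ∑ p : Fin n × Fin n, (A ^ 2) p.1 p.2 * A p.2 p.1 := by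
    rw [htdef, pow_succ, Matrix.trace, Fintype.sum_prod_type]
    simp [Matrix.diag, Matrix.mul_apply]
  have hAA : ∑ p : Fin n × Fin n, ((A ^ 2) p.1 p.2) ^ 2 ≤ S ^ 2 := by
    have h1 : ∀ p : Fin n × Fin n, ((A ^ 2) p.1 p.2) ^ 2 ≤
        (∑ k, A p.1 k ^ 2) * (∑ k, A k p.2 ^ 2) := by
      intro p
      rw [pow_two A, Matrix.mul_apply]
      exact Finset.sum_mul_sq_le_sq_mul_sq _ _ _
    calc ∑ p : Fin n × Fin n, ((A ^ 2) p.1 p.2) ^ 2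
        ≤ ∑ p : Fin n × Fin n, (∑ k, A p.1 k ^ 2) * (∑ k, A k p.2 ^ 2) :=
          Finset.sum_le_sum fun p _ => h1 p
      _ = (∑ i, ∑ k, A i k ^ 2) * (∑ j, ∑ k, A k j ^ 2) := by
          rw [Finset.sum_mul_sum, Fintype.sum_prod_type]
      _ = S * S := by rw [hSdef]; congr 1; exact Finset.sum_comm
      _ = S ^ 2 := (sq S).symm
  have hAt : ∑ p : Fin n × Fin n, (A p.2 p.1) ^ 2 = S := by
    rw [hSdef, Fintype.sum_prod_type]
    exact Finset.sum_comm
  have ht2 : t ^ 2 ≤ S ^ 2 * S := by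
    rw [htr3]
    calc (∑ p : Fin n × Fin n, (A ^ 2) p.1 p.2 * A p.2 p.1) ^ 2
        ≤ (∑ p : Fin n × Fin n, ((A ^ 2) p.1 p.2) ^ 2) *
            (∑ p : Fin n × Fin n, (A p.2 p.1) ^ 2) :=
          Finset.sum_mul_sq_le_sq_mul_sq _ _ _
      _ ≤ S ^ 2 * S := by rw [hAt]; exact mul_le_mul_of_nonneg_right hAA hS0
  have htlb : -t ≤ S * r := by
    nlinarith [sq_nonneg (t + S * r), mul_nonneg hS0 hr0]
  -- main polynomial inequality
  have hSε : S ≤ ε ^ 2 := by nlinarith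
  have poly : 2 * S ^ 2 * n + 2 * H ^ 2 * S - 2 * h₀ * t * n - 4 * h₀ * H * S ≤
      (-γ ^ 2 + (2 * n + 2) * ε ^ 2 * n + 2 * (ε * e) * n + (8:ℝ) * ε) * S := by
    have hA : -(2 * h₀ * t * n) ≤ 2 * h₀ * (S * r) * n := by
      have := mul_le_mul_of_nonneg_right htlb (mul_nonneg hh₀ hn0.le)
      nlinarith
    have hB : 2 * h₀ * (S * r) * n ≤ 2 * (H + e) * (S * r) * n := by
      have hSr : 0 ≤ S * r := mul_nonneg hS0 hr0
      nlinarith [mul_nonneg (mul_nonneg hSr hn0.le) (sub_nonneg.mpr hd1)]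
    have hC : 2 * (H + e) * (S * r) * n ≤ 2 * (H + e) * (S * ε) * n := by
      have hHe : 0 ≤ H + e := by linarith
      nlinarith [mul_nonneg (mul_nonneg (mul_nonneg hHe hS0) hn0.le) (sub_nonneg.mpr hrε)]
    have hD : -(4 * h₀ * H * S) ≤ -(4 * H ^ 2 * S) + 4 * e * H * S := by
      nlinarith [mul_nonneg (mul_nonneg hS0 (by linarith : (0:ℝ) ≤ H)) (sub_nonneg.mpr hd2)]
    nlinarith [mul_nonneg hS0 (sq_nonneg (H - 2 * n * ε)),
      mul_nonneg hS0 (sq_nonneg (H - 4 * e)),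
      mul_nonneg (mul_nonneg hS0 (sub_nonneg.mpr hSε)) hn0.le,
      mul_nonneg hS0 (mul_nonneg (sub_nonneg.mpr hH) (by linarith : (0:ℝ) ≤ H + γ)),
      sq_nonneg e, he2]
  rw [hεe]
  calc 2 * (S + H ^ 2 / n) * S - 2 * h₀ * (t + 2 / n * H * S)
      = (2 * S ^ 2 * n + 2 * H ^ 2 * S - 2 * h₀ * t * n - 4 * h₀ * H * S) / n := by
        field_simp; ring
    _ ≤ ((-γ ^ 2 + (2 * n + 2) * ε ^ 2 * n + 2 * (ε * e) * n + (8:ℝ) * ε) * S) / n :=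
        (div_le_div_iff_of_pos_right hn0).mpr poly
    _ = (-γ ^ 2 / n + (2 * n + 2) * ε ^ 2 + 2 * (ε * e) + 8 / n * ε) * S := by
        field_simp
end

section
/- Let ε > 0, α > 0, T > 0, and let h : [0, T] → ℝ be differentiable with h(0) ≥ 0 and h′(t) ≥ −ε^{5/2}·e^{−(5/2)αt} − ε·e^{−αt}·h(t) for all t ∈ [0, T]. Then h(t) ≥ h(0)·e^{−ε/α} − (2/(5α))·ε^{5/2}·e^{ε/α} for all t ∈ [0, T]. -/
/-!
With the integrating factor `φ t = exp (-(ε/α) e^{-αt})`, which satisfies `φ' = ε e^{-αt} φ`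
and `e^{-ε/α} ≤ φ ≤ 1` for `t ≥ 0`, the hypothesis makes
`t ↦ h t φ t + C (1 - e^{-(5/2)αt})`, `C = 2 ε^{5/2} / (5α)`, nondecreasing. Hence
`h t φ t ≥ h 0 e^{-ε/α} - C`, and dividing by `φ t` gives the bound, whatever the sign of `h t`.
-/

open Real Set

theorem monotoneOn_mul_add_of_hasDerivWithinAt {a b : ℝ} {h h' φ p q R r : ℝ → ℝ}
    (hh : ∀ t ∈ Icc a b, HasDerivWithinAt h (h' t) (Icc a b) t)
    (hφ : ∀ t ∈ Icc a b, HasDerivWithinAt φ (p t * φ t) (Icc a b) t)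
    (hR : ∀ t ∈ Icc a b, HasDerivWithinAt R (r t) (Icc a b) t)
    (hφ_nonneg : ∀ t ∈ Icc a b, 0 ≤ φ t)
    (hineq : ∀ t ∈ Icc a b, -q t ≤ h' t + p t * h t)
    (hqr : ∀ t ∈ Icc a b, q t * φ t ≤ r t) :
    MonotoneOn (fun t => h t * φ t + R t) (Icc a b) := by
  have hderiv : ∀ t ∈ Icc a b, HasDerivWithinAt (fun t => h t * φ t + R t)
      ((h' t + p t * h t) * φ t + r t) (Icc a b) t := fun t ht =>
    (((hh t ht).mul (hφ t ht)).add (hR t ht)).congr_deriv (by ring)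
  have hderiv_nonneg : ∀ t ∈ Icc a b, 0 ≤ (h' t + p t * h t) * φ t + r t := fun t ht => by
    nlinarith [mul_le_mul_of_nonneg_right (hineq t ht) (hφ_nonneg t ht), hqr t ht]
  refine monotoneOn_of_hasDerivWithinAt_nonneg (convex_Icc a b)
    (fun t ht => (hderiv t ht).continuousWithinAt) (fun t ht => ?_)
    (fun t ht => hderiv_nonneg t (interior_subset ht))
  exact (hderiv t (interior_subset ht)).mono interior_subset

noncomputable def integratingFactor (ε α t : ℝ) : ℝ := exp (-(ε / α) * exp (-α * t))

theorem hasDerivAt_integratingFactor {α : ℝ} (hα : α ≠ 0) (ε t : ℝ) :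
    HasDerivAt (integratingFactor ε α) (ε * exp (-α * t) * integratingFactor ε α t) t := by
  have hlin : HasDerivAt (fun t : ℝ => -α * t) (-α) t := by
    simpa using (hasDerivAt_id t).const_mul (-α)
  unfold integratingFactor
  refine (hlin.exp.const_mul (-(ε / α))).exp.congr_deriv ?_
  field_simp

theorem hasDerivAt_mul_one_sub_exp (c β t : ℝ) :
    HasDerivAt (fun t => c * (1 - exp (β * t))) (-(c * β) * exp (β * t)) t := by
  have hlin : HasDerivAt (fun t : ℝ => β * t) β t := by
    simpa using (hasDerivAt_id t).const_mul β
  exact (((hasDerivAt_const t 1).sub hlin.exp).const_mul c).congr_deriv (by ring)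

theorem integratingFactor_le_one {ε α : ℝ} (hεα : 0 ≤ ε / α) (t : ℝ) :
    integratingFactor ε α t ≤ 1 :=
  exp_le_one_iff.mpr (by nlinarith [exp_pos (-α * t)])

theorem exp_neg_le_integratingFactor {ε α t : ℝ} (hεα : 0 ≤ ε / α) (hα : 0 ≤ α) (ht : 0 ≤ t) :
    exp (-(ε / α)) ≤ integratingFactor ε α t := by
  have hexp_le_one : exp (-α * t) ≤ 1 := exp_le_one_iff.mpr (by nlinarith)
  exact exp_le_exp.mpr (by nlinarith)

theorem sub_mul_exp_le_of_sub_le_mul {x y c k φ : ℝ} (hy : 0 ≤ y) (hc : 0 ≤ c) (hk : 0 ≤ k)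
    (hφ_ge : exp (-k) ≤ φ) (hφ_le : φ ≤ 1) (hxφ : y * exp (-k) - c ≤ x * φ) :
    y * exp (-k) - c * exp k ≤ x := by
  have hexp_mul : exp (-k) * exp k = 1 := by rw [← exp_add, neg_add_cancel, exp_zero]
  have hexp_ge : 1 ≤ exp k := one_le_exp hk
  have hexp_neg_le : exp (-k) ≤ 1 := exp_le_one_iff.mpr (by linarith)
  rcases le_or_gt 0 x with hx | hx
  · nlinarith [mul_le_mul_of_nonneg_left hφ_le hx]
  · nlinarith [mul_le_mul_of_nonpos_left hφ_ge hx.le, mul_le_mul_of_nonneg_left hexp_neg_le hy]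

theorem average_mean_curvature_lower_bound_general
    (ε α T : ℝ) (hε : 0 < ε) (hα : 0 < α)
    (h h' : ℝ → ℝ)
    (hderiv : ∀ t ∈ Set.Icc (0 : ℝ) T, HasDerivWithinAt h (h' t) (Set.Icc 0 T) t)
    (h0 : 0 ≤ h 0)
    (hbound : ∀ t ∈ Set.Icc (0 : ℝ) T,
      -(ε ^ ((5 : ℝ) / 2)) * Real.exp (-(5 / 2) * α * t)
        - ε * Real.exp (-α * t) * h t ≤ h' t) :
    ∀ t ∈ Set.Icc (0 : ℝ) T,
      h 0 * Real.exp (-(ε / α)) - (2 / (5 * α)) * ε ^ ((5 : ℝ) / 2) * Real.exp (ε / α)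
        ≤ h t := by
  set C := (2 / (5 * α)) * ε ^ ((5 : ℝ) / 2)
  set q : ℝ → ℝ := fun t => ε ^ ((5 : ℝ) / 2) * exp (-(5 / 2) * α * t)
  have hεα : 0 ≤ ε / α := by positivity
  have hR : ∀ t, HasDerivAt (fun t => C * (1 - exp (-(5 / 2) * α * t))) (q t) t := fun t =>
    (hasDerivAt_mul_one_sub_exp C (-(5 / 2) * α) t).congr_deriv (by simp only [C, q]; field_simp)
  have hmono := monotoneOn_mul_add_of_hasDerivWithinAt (q := q) hderiv
    (fun t _ => (hasDerivAt_integratingFactor hα.ne' ε t).hasDerivWithinAt)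
    (fun t _ => (hR t).hasDerivWithinAt) (fun t _ => (exp_pos _).le)
    (fun t ht => by linarith [hbound t ht])
    (fun t _ => mul_le_of_le_one_right (by positivity) (integratingFactor_le_one hεα t))
  intro t ht
  have hmono_t := hmono ⟨le_rfl, ht.1.trans ht.2⟩ ht ht.1
  have hφ0 : integratingFactor ε α 0 = exp (-(ε / α)) := by simp [integratingFactor]
  have hR_le : C * (1 - exp (-(5 / 2) * α * t)) ≤ C :=
    mul_le_of_le_one_right (by positivity) (by linarith [exp_pos (-(5 / 2) * α * t)])
  refine sub_mul_exp_le_of_sub_le_mul h0 (by positivity) hεα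
    (exp_neg_le_integratingFactor hεα hα.le ht.1) (integratingFactor_le_one hεα t) ?_
  simp only [hφ0, mul_zero, exp_zero, sub_self, add_zero] at hmono_t
  linarith

/-- Lower bound for `h` in Lemma 3.4: if `h(0) ≥ 0` and
`h′(t) ≥ −ε^{5/2} e^{−(5/2)αt} − ε e^{−αt} h(t)` on `[0, T]`, then
`h(t) ≥ h(0) e^{−ε/α} − (2/(5α)) ε^{5/2} e^{ε/α}` on `[0, T]`. -/
theorem average_mean_curvature_lower_bound
    (ε α T : ℝ) (hε : 0 < ε) (hα : 0 < α) (hT : 0 < T)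
    (h h' : ℝ → ℝ)
    (hderiv : ∀ t ∈ Set.Icc (0 : ℝ) T, HasDerivWithinAt h (h' t) (Set.Icc 0 T) t)
    (h0 : 0 ≤ h 0)
    (hbound : ∀ t ∈ Set.Icc (0 : ℝ) T,
      -(ε ^ ((5 : ℝ) / 2)) * Real.exp (-(5 / 2) * α * t)
        - ε * Real.exp (-α * t) * h t ≤ h' t) :
    ∀ t ∈ Set.Icc (0 : ℝ) T,
      h 0 * Real.exp (-(ε / α)) - (2 / (5 * α)) * ε ^ ((5 : ℝ) / 2) * Real.exp (ε / α)
        ≤ h t :=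
  average_mean_curvature_lower_bound_general ε α T hε hα h h' hderiv h0 hbound
end
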